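/- (Monotonicity of odometer) Let m_{V,η} = sup over legal sequences β contained in V of m_β. If V ⊆ V' are finite sets and η ≤ η' pointwise (in the order 0 < ρ < 1 < 2 < ⋯), then m_{V,η}(x) ≤ m_{V',η'}(x) for every x. -/
import Mathlib


namespace ARW

/-- The state of a site: `nat n` means `n` active particles, `rho` means one passive particle. -/
inductive Nrho where
  | nat : ℕ → Nrho
  | rho : Nrho
deriving DecidableEq

namespace Nrho

/-- Numerical value used to define the order `0 < ρ < 1 < 2 < ⋯`. -/
def val : Nrho → ℚ
  | nat n => (n : ℚ)
  | rho => 1/2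

instance : LE Nrho := ⟨fun a b => a.val ≤ b.val⟩
instance : LT Nrho := ⟨fun a b => a.val < b.val⟩

/-- Adding one particle: `ρ + 1 = 2`. -/
def addOne : Nrho → Nrho
  | nat n => nat (n + 1)
  | rho => nat 2

/-- Removing one particle (junk value on `0`): `ρ - 1 = 0`. -/
def subOne : Nrho → Nrho
  | nat n => nat (n - 1)
  | rho => nat 0

/-- The sleep operation `n ↦ n·ρ`: `1·ρ = ρ`, `n·ρ = n` for `n ≥ 2`, `ρ·ρ = ρ`
(junk value on `0`). -/
def sleep : Nrho → Nrho
  | nat 0 => nat 0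
  | nat 1 => rho
  | nat (n + 2) => nat (n + 2)
  | rho => rho

end Nrho

/-- An instruction at a site: jump to a given site, or fall asleep. -/
inductive Instr (S : Type) where
  | jump : S → Instr S
  | sleep : Instr S
deriving DecidableEq

/-- A configuration of the activated random walk system. -/
abbrev Config (S : Type) := S → Nrho

/-- A field of instructions `(τ^{x,j})`. -/
abbrev IField (S : Type) := S → ℕ → Instr S

variable {S : Type} [DecidableEq S]

/-- Apply one instruction at site `x`. -/
def applyInstr : Instr S → S → Config S → Config S
  | .jump y, x, η =>
      let η' := Function.update η x (η x).subOne
      Function.update η' y (η' y).addOne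
  | .sleep, x, η => Function.update η x (η x).sleep

/-- Topple site `x`: use the next unused instruction at `x` and increment the odometer. -/
def topple (I : IField S) : Config S × (S → ℕ) → S → Config S × (S → ℕ)
  | (η, h), x => (applyInstr (I x (h x)) x η, Function.update h x (h x + 1))

/-- Topple a finite sequence of sites, in order. -/
def toppleSeq (I : IField S) : Config S × (S → ℕ) → List S → Config S × (S → ℕ)
  | s, [] => s
  | s, x :: α => toppleSeq I (topple I s x) α

/-- `Phi I η α` is the configuration `Φ_α η` obtained from `η` by toppling
the sequence `α` (starting with odometer `0`). -/
def Phi (I : IField S) (η : Config S) (α : List S) : Config S :=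
  (toppleSeq I (η, fun _ => 0) α).1

/-- The sequence `α` is acceptable from the state `(η, h)`: each toppled site has value `≥ ρ`,
i.e. different from `0`, when it is toppled. -/
def AcceptableFrom (I : IField S) : Config S × (S → ℕ) → List S → Prop
  | _, [] => True
  | (η, h), x :: α => η x ≠ Nrho.nat 0 ∧ AcceptableFrom I (topple I (η, h) x) α

/-- The sequence `α` is legal from the state `(η, h)`: each toppled site is unstable,
i.e. has value `≥ 1`, when it is toppled. -/
def LegalFrom (I : IField S) : Config S × (S → ℕ) → List S → Prop
  | _, [] => True
  | (η, h), x :: α => Nrho.nat 1 ≤ η x ∧ LegalFrom I (topple I (η, h) x) α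

/-- `α` is an acceptable sequence of topplings for the configuration `η`. -/
def Acceptable (I : IField S) (η : Config S) (α : List S) : Prop :=
  AcceptableFrom I (η, fun _ => 0) α

/-- `α` is a legal sequence of topplings for the configuration `η`. -/
def Legal (I : IField S) (η : Config S) (α : List S) : Prop :=
  LegalFrom I (η, fun _ => 0) α

/-- Site `x` is stable for `η` if it carries no active particle. -/
def Stable (η : Config S) (x : S) : Prop := η x ≤ Nrho.rho

/-- `η` is stable in `V` if every site of `V` is stable. -/
def StableIn (η : Config S) (V : Finset S) : Prop := ∀ x ∈ V, Stable η x

end ARW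

namespace ARW

/-- The odometer `m_{V,η}(x)`: the supremum, over legal toppling sequences `β` for `η`
contained in `V`, of the number of topplings of `β` at `x` (with values in `ℕ∞`). -/
noncomputable def odom {S : Type} [DecidableEq S] (I : IField S) (η : Config S)
    (V : Finset S) (x : S) : ℕ∞ :=
  ⨆ β ∈ {β : List S | Legal I η β ∧ ∀ y ∈ β, y ∈ V}, (β.count x : ℕ∞)

end ARW

namespace ARW

variable {S : Type} [DecidableEq S]

lemma Nrho.le_def (a b : Nrho) : a ≤ b ↔ a.val ≤ b.val := Iff.rfl

lemma Nrho.le_trans' {a b c : Nrho} (h1 : a ≤ b) (h2 : b ≤ c) : a ≤ c :=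
  (Nrho.le_def _ _).2 (le_trans ((Nrho.le_def _ _).1 h1) ((Nrho.le_def _ _).1 h2))

lemma Nrho.nat_le_nat {n m : ℕ} (h : Nrho.nat n ≤ Nrho.nat m) : n ≤ m := by
  have := (Nrho.le_def _ _).1 h
  simp only [Nrho.val] at this
  exact_mod_cast this

lemma Nrho.nat_le_nat' {n m : ℕ} (h : n ≤ m) : Nrho.nat n ≤ Nrho.nat m := by
  rw [Nrho.le_def]
  simp only [Nrho.val]
  exact_mod_cast h

lemma Nrho.eq_nat_of_one_le {a : Nrho} (h : Nrho.nat 1 ≤ a) :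
    ∃ n, 1 ≤ n ∧ a = Nrho.nat n := by
  cases a with
  | nat n => exact ⟨n, Nrho.nat_le_nat h, rfl⟩
  | rho =>
    exfalso
    have := (Nrho.le_def _ _).1 h
    norm_num [Nrho.val] at this

lemma Nrho.addOne_mono {a b : Nrho} (h : a ≤ b) : a.addOne ≤ b.addOne := by
  cases a with
  | nat n =>
    cases b with
    | nat m => exact Nrho.nat_le_nat' (Nat.succ_le_succ (Nrho.nat_le_nat h))
    | rho =>
      have hn : (n : ℚ) ≤ 1/2 := (Nrho.le_def _ _).1 h
      have hn0 : n = 0 := by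
        by_contra hc
        have : (1:ℚ) ≤ (n:ℚ) := by exact_mod_cast Nat.one_le_iff_ne_zero.2 hc
        linarith
      subst hn0
      exact Nrho.nat_le_nat' (by norm_num)
  | rho =>
    cases b with
    | nat m =>
      have hm : (1:ℚ)/2 ≤ (m:ℚ) := (Nrho.le_def _ _).1 h
      have hm1 : 1 ≤ m := by
        by_contra hc
        push_neg at hc
        interval_cases m
        norm_num at hm
      exact Nrho.nat_le_nat' (Nat.succ_le_succ hm1)
    | rho => exact (Nrho.le_def _ _).2 le_rfl

lemma Nrho.subOne_mono' {n m : ℕ} (h : n ≤ m) :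
    (Nrho.nat n).subOne ≤ (Nrho.nat m).subOne :=
  Nrho.nat_le_nat' (Nat.sub_le_sub_right h 1)

lemma Nrho.sleep_mono' {n m : ℕ} (hn : 1 ≤ n) (h : n ≤ m) :
    (Nrho.nat n).sleep ≤ (Nrho.nat m).sleep := by
  match n, hn with
  | 1, _ =>
    match m, h with
    | 1, _ => exact (Nrho.le_def _ _).2 le_rfl
    | (k+2), _ =>
      rw [Nrho.le_def]
      show (1:ℚ)/2 ≤ ((k+2 : ℕ) : ℚ)
      push_cast
      linarith [Nat.cast_nonneg (α := ℚ) k]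
  | (n+2), _ =>
    have hm2 : 2 ≤ m := le_trans (by omega) h
    match m, hm2 with
    | (k+2), _ =>
      show (Nrho.nat (n+2)) ≤ (Nrho.nat (k+2))
      exact Nrho.nat_le_nat' h

lemma applyInstr_mono (i : Instr S) (x : S) (η η' : Config S)
    (hle : ∀ y, η y ≤ η' y) (hx : Nrho.nat 1 ≤ η x) :
    ∀ y, applyInstr i x η y ≤ applyInstr i x η' y := by
  obtain ⟨n, hn1, hn⟩ := Nrho.eq_nat_of_one_le hx
  obtain ⟨m, hm1, hm⟩ := Nrho.eq_nat_of_one_le (Nrho.le_trans' hx (hle x))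
  have hnm : n ≤ m := Nrho.nat_le_nat (hn ▸ hm ▸ hle x)
  intro y
  cases i with
  | sleep =>
    simp only [applyInstr]
    by_cases hyx : y = x
    · subst hyx
      simp only [Function.update_self, hn, hm]
      exact Nrho.sleep_mono' hn1 hnm
    · simpa only [Function.update_of_ne hyx] using hle y
  | jump z =>
    simp only [applyInstr]
    by_cases hyz : y = z
    · subst hyz
      simp only [Function.update_self]
      apply Nrho.addOne_mono
      by_cases hyx : y = x
      · subst hyx
        simp only [Function.update_self, hn, hm]
        exact Nrho.subOne_mono' hnm
      · simpa only [Function.update_of_ne hyx] using hle y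
    · simp only [Function.update_of_ne hyz]
      by_cases hyx : y = x
      · subst hyx
        simp only [Function.update_self, hn, hm]
        exact Nrho.subOne_mono' hnm
      · simpa only [Function.update_of_ne hyx] using hle y

lemma legalFrom_mono (I : IField S) :
    ∀ (β : List S) (η η' : Config S) (h : S → ℕ),
      (∀ y, η y ≤ η' y) → LegalFrom I (η, h) β → LegalFrom I (η', h) β := by
  intro β
  induction β with
  | nil => intro _ _ _ _ _; trivial
  | cons x α ih =>
    intro η η' h hle hleg
    obtain ⟨hx, htail⟩ := hleg
    refine ⟨Nrho.le_trans' hx (hle x), ?_⟩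
    exact ih _ _ _ (applyInstr_mono _ x η η' hle hx) htail

end ARW

open ARW in
/-- **Monotonicity of the odometer.** If `V ⊆ V'` and `η ≤ η'` pointwise
(in the order `0 < ρ < 1 < 2 < ⋯`), then `m_{V,η}(x) ≤ m_{V',η'}(x)` for every `x`. -/
theorem odometer_monotone {S : Type} [DecidableEq S] (I : IField S) (η η' : Config S)
    (V V' : Finset S) (hV : V ⊆ V') (hη : ∀ x, η x ≤ η' x) :
    ∀ x, odom I η V x ≤ odom I η' V' x := by
  intro x
  unfold odom
  refine iSup₂_le fun β hβ => ?_
  refine le_iSup₂_of_le β ⟨?_, fun y hy => hV (hβ.2 y hy)⟩ le_rfl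
  exact legalFrom_mono I β η η' _ hη hβ.1
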